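/- arXiv:1302.4200 — 3 statements merged into one kernel-verified Lean document; each statement's English description precedes it below -/
import Mathlib

section
/- Let f : X → Y be a continuous, surjective, quasi-open, closed map. If X is an s-m₁-space, then Y is an s-m₁-space. -/
/-!
Pull a closed set `G ⊆ Y` back to the closed set `f⁻¹(G)`, take a closure-preserving open base
`𝓑` at it, and push it forward as `{int f(V) | V ∈ 𝓑}`. Since `f` is a closed surjection, the
small image `Y \ f(X \ V)` is an open set between `G` and `f(V)`, so these sets form a base at `G`.
Closure preservation survives because `f` maps the closure of a union of members of `𝓑` onto a
closed set, and quasi-openness gives `f(cl V) ⊆ cl (int f(V))` for open `V`.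
-/

open Set Topology Cardinal

universe u

/-- A family of sets is closure-preserving if the closure of the union of any
subfamily equals the union of the closures. -/
def ClosurePreserving {X : Type*} [TopologicalSpace X] (P : Set (Set X)) : Prop :=
  ∀ P' ⊆ P, closure (⋃₀ P') = ⋃ B ∈ P', closure B

/-- A family of open sets is a neighborhood base at the set `F`. -/
def IsNbhdBaseAt {X : Type*} [TopologicalSpace X] (B : Set (Set X)) (F : Set X) : Prop :=
  (∀ V ∈ B, IsOpen V ∧ F ⊆ V) ∧ ∀ U : Set X, IsOpen U → F ⊆ U → ∃ V ∈ B, V ⊆ U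

/-- `X` is s-m₁: every closed set has a closure-preserving open neighborhood base. -/
def SM1 (X : Type*) [TopologicalSpace X] : Prop :=
  ∀ F : Set X, IsClosed F → ∃ B : Set (Set X), IsNbhdBaseAt B F ∧ ClosurePreserving B

/-- `X` is m₁ at `x`: there is a closure-preserving local base of open sets at `x`. -/
def M1At {X : Type*} [TopologicalSpace X] (x : X) : Prop :=
  ∃ B : Set (Set X), (∀ V ∈ B, IsOpen V ∧ x ∈ V) ∧
    (∀ U : Set X, IsOpen U → x ∈ U → ∃ V ∈ B, V ⊆ U) ∧ ClosurePreserving B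

def IsQuasiOpenMap {X Y : Type*} [TopologicalSpace X] [TopologicalSpace Y] (f : X → Y) : Prop :=
  ∀ U : Set X, IsOpen U → U.Nonempty → (interior (f '' U)).Nonempty

section

variable {X Y : Type*} [TopologicalSpace X] [TopologicalSpace Y] {f : X → Y}

lemma closurePreserving_of_closure_sUnion_subset {P : Set (Set X)}
    (h : ∀ P' ⊆ P, closure (⋃₀ P') ⊆ ⋃ B ∈ P', closure B) : ClosurePreserving P :=
  fun P' hP' => (h P' hP').antisymm <|
    iUnion₂_subset fun _ hB => closure_mono (subset_sUnion_of_mem hB)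

lemma IsQuasiOpenMap.image_closure_subset_closure_interior_image (hqo : IsQuasiOpenMap f)
    (hc : Continuous f) {V : Set X} (hV : IsOpen V) :
    f '' closure V ⊆ closure (interior (f '' V)) := by
  rintro _ ⟨x, hx, rfl⟩
  refine mem_closure_iff.mpr fun W hW hxW => ?_
  have hWV : (f ⁻¹' W ∩ V).Nonempty := mem_closure_iff.mp hx _ (hW.preimage hc) hxW
  obtain ⟨y, hy⟩ := hqo _ ((hW.preimage hc).inter hV) hWV
  have hy_image : y ∈ W ∩ f '' V := image_preimage_inter f V W ▸ interior_subset hy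
  exact ⟨y, hy_image.1, interior_mono (image_mono inter_subset_right) hy⟩

lemma IsClosedMap.subset_interior_image (hcl : IsClosedMap f) (hs : Function.Surjective f)
    {G : Set Y} {V : Set X} (hV : IsOpen V) (hGV : f ⁻¹' G ⊆ V) :
    G ⊆ interior (f '' V) := by
  have hkern_image : kernImage f V ⊆ f '' V := fun y hy =>
    let ⟨x, hx⟩ := hs y
    ⟨x, hy hx, hx⟩
  calc G ⊆ kernImage f V := subset_kernImage_iff.mpr hGV
    _ ⊆ interior (f '' V) := interior_maximal hkern_image (isClosedMap_iff_kernImage.mp hcl hV)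

lemma IsNbhdBaseAt.image_interior_image (hc : Continuous f) (hs : Function.Surjective f)
    (hcl : IsClosedMap f) {B : Set (Set X)} {G : Set Y} (hB : IsNbhdBaseAt B (f ⁻¹' G)) :
    IsNbhdBaseAt ((fun V => interior (f '' V)) '' B) G := by
  refine ⟨?_, fun U hU hGU => ?_⟩
  · rintro _ ⟨V, hV, rfl⟩
    exact ⟨isOpen_interior, hcl.subset_interior_image hs (hB.1 V hV).1 (hB.1 V hV).2⟩
  · obtain ⟨V, hV, hVU⟩ := hB.2 _ (hU.preimage hc) (preimage_mono hGU)
    exact ⟨_, mem_image_of_mem _ hV,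
      interior_subset.trans <| (image_mono hVU).trans (image_preimage_subset f U)⟩

lemma ClosurePreserving.image_interior_image (hc : Continuous f) (hqo : IsQuasiOpenMap f)
    (hcl : IsClosedMap f) {B : Set (Set X)} (hBo : ∀ V ∈ B, IsOpen V)
    (hB : ClosurePreserving B) :
    ClosurePreserving ((fun V => interior (f '' V)) '' B) := by
  refine closurePreserving_of_closure_sUnion_subset fun C hC => ?_
  obtain ⟨B', hB'B, rfl⟩ := subset_image_iff.mp hC
  rw [sUnion_image, biUnion_image]
  have hunion : ⋃ V ∈ B', interior (f '' V) ⊆ f '' closure (⋃₀ B') :=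
    iUnion₂_subset fun V hV =>
      interior_subset.trans (image_mono ((subset_sUnion_of_mem hV).trans subset_closure))
  calc closure (⋃ V ∈ B', interior (f '' V))
      ⊆ f '' closure (⋃₀ B') := closure_minimal hunion (hcl _ isClosed_closure)
    _ = ⋃ V ∈ B', f '' closure V := by rw [hB B' hB'B, image_iUnion₂]
    _ ⊆ ⋃ V ∈ B', closure (interior (f '' V)) := iUnion₂_mono fun V hV =>
      hqo.image_closure_subset_closure_interior_image hc (hBo V (hB'B hV))

end

/-- Quasi-open closed continuous surjections preserve s-m₁-spaces. -/
theorem quasiOpen_closed_preserves_sM1 {X Y : Type*}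
    [TopologicalSpace X] [TopologicalSpace Y] (f : X → Y)
    (hc : Continuous f) (hs : Function.Surjective f)
    (hqo : ∀ U : Set X, IsOpen U → U.Nonempty → (interior (f '' U)).Nonempty)
    (hcl : IsClosedMap f) (h : SM1 X) : SM1 Y := by
  intro G hG
  obtain ⟨B, hB, hBcp⟩ := h (f ⁻¹' G) (hG.preimage hc)
  exact ⟨_, hB.image_interior_image hc hs hcl,
    hBcp.image_interior_image hc hqo hcl fun V hV => (hB.1 V hV).1⟩
end

section
/- If X is a σ-m₃-space (every point has a σ-cushioned local pairbase), then the tightness of X is at most its cellularity: t(X) ≤ c(X). -/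
open Set Topology Cardinal

/-- A family of pairs of sets is cushioned. -/
def Cushioned {X : Type*} [TopologicalSpace X] (P : Set (Set X × Set X)) : Prop :=
  ∀ P' ⊆ P, closure (⋃ p ∈ P', p.1) ⊆ ⋃ p ∈ P', p.2

/-- `X` is σ-m₃ at `x`: there is a σ-cushioned local pairbase at `x`. -/
def SigmaM3At {X : Type*} [TopologicalSpace X] (x : X) : Prop :=
  ∃ P : ℕ → Set (Set X × Set X),
    (∀ n, Cushioned (P n)) ∧
    (∀ n, ∀ p ∈ P n, IsOpen p.1 ∧ p.1 ⊆ p.2) ∧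
    (∀ U : Set X, IsOpen U → x ∈ U → ∃ n, ∃ p ∈ P n, x ∈ p.1 ∧ p.2 ⊆ U)

universe u

/-!
Fix `x ∈ closure A` and a σ-cushioned pairbase `⋃ₙ Pₙ` at `x`. It suffices to find, for each `n`,
some `Bₙ ⊆ A` with `#Bₙ ≤ κ` meeting `p.2` for every `p ∈ Pₙ` with `p.1 ∩ A ≠ ∅`: the union of the
`Bₙ` then works. If no such `Bₙ` exists, a greedy recursion of length `κ⁺` picks `qα ∈ Pₙ` and
`aα ∈ A ∩ qα.1` with `aβ ∉ qα.2` for `β < α`. Cushioning puts `closure (⋃ β > α, qβ.1)` inside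
`⋃ β > α, qβ.2`, which misses `aα`; so the open sets `qα.1 \ closure (⋃ β > α, qβ.1)` are nonempty
and pairwise disjoint, `κ⁺` cells in all.
-/

open Function

theorem Cardinal.mk_iUnion_nat_le {α : Type u} {κ : Cardinal.{u}} (hκ : ℵ₀ ≤ κ) {B : ℕ → Set α}
    (hB : ∀ n, #(B n) ≤ κ) : #(⋃ n, B n) ≤ κ := by
  rw [← lift_le.{0}]
  calc lift.{0} #(⋃ n, B n) ≤ lift.{u} #ℕ * ⨆ n, lift.{0} #(B n) := mk_iUnion_le_lift B
    _ ≤ ℵ₀ * lift.{0} κ := by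
      rw [mk_nat, lift_aleph0]
      gcongr
      exact ciSup_le fun n => lift_le.2 (hB n)
    _ = lift.{0} κ := aleph0_mul_eq (by simpa using hκ)

theorem exists_transfinite_seq_of_forall_mk_le {γ : Type u} (κ : Cardinal.{u})
    (R : Set γ → γ → Prop) (h : ∀ B : Set γ, #B ≤ κ → ∃ c, R B c) :
    ∃ f : (Order.succ κ).ord.ToType → γ, ∀ w, R (f '' Iio w) (f w) := by
  classical
  obtain ⟨c₀, -⟩ := h ∅ (by simp)
  let next : Set γ → γ := fun B => if hB : #B ≤ κ then (h B hB).choose else c₀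
  let f : (Order.succ κ).ord.ToType → γ :=
    WellFoundedLT.fix fun w ih => next (range fun v : Iio w => ih v v.2)
  refine ⟨f, fun w => ?_⟩
  have hsmall : #(f '' Iio w) ≤ κ :=
    mk_image_le.trans (Order.lt_succ_iff.1 (by simpa using mk_Iio_lt w))
  have hfw : f w = next (f '' Iio w) := by
    rw [image_eq_range]; exact WellFoundedLT.fix_eq _ w
  rw [hfw]
  simp only [next, dif_pos hsmall]
  exact (h _ hsmall).choose_spec

def CellularityLE (X : Type u) [TopologicalSpace X] (κ : Cardinal.{u}) : Prop :=
  ∀ C : Set (Set X), (∀ V ∈ C, IsOpen V ∧ V.Nonempty) → C.PairwiseDisjoint id → #C ≤ κ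

section
variable {X : Type u} [TopologicalSpace X] {κ : Cardinal.{u}}

theorem CellularityLE.mk_le (hcell : CellularityLE X κ) {ι : Type u} {U : ι → Set X}
    (hU : ∀ i, IsOpen (U i)) (hne : ∀ i, (U i).Nonempty) (hd : Pairwise (Disjoint on U)) :
    #ι ≤ κ := by
  have hinj : Injective U :=
    pairwise_ne_iff_injective.1 <| hd.mono fun i _ hij => hij.ne (hne i).ne_empty
  rw [← mk_range_eq U hinj]
  exact hcell _ (forall_mem_range.2 fun i => ⟨hU i, hne i⟩) hd.range_pairwise

theorem pairwise_disjoint_sdiff_closure_biUnion_Ioi {ι : Type*} [LinearOrder ι]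
    (V : ι → Set X) : Pairwise (Disjoint on fun i => V i \ closure (⋃ j ∈ Ioi i, V j)) :=
  (pairwise_disjoint_on _).2 fun _ _ hij => disjoint_left.2 fun _ hi hj =>
    hi.2 (subset_closure (mem_biUnion hij hj.1))

theorem Cushioned.mk_le_of_forall_lt_notMem (hcell : CellularityLE X κ) {P : Set (Set X × Set X)}
    (hP : Cushioned P) (hopen : ∀ p ∈ P, IsOpen p.1) {ι : Type u} [LinearOrder ι]
    (q : ι → Set X × Set X) (a : ι → X) (hq : ∀ i, q i ∈ P) (ha : ∀ i, a i ∈ (q i).1)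
    (hsep : ∀ ⦃i j⦄, i < j → a i ∉ (q j).2) : #ι ≤ κ := by
  have hmem : ∀ i, a i ∈ (q i).1 \ closure (⋃ j ∈ Ioi i, (q j).1) := by
    refine fun i => ⟨ha i, fun hcl => ?_⟩
    have hcover := hP (q '' Ioi i) (image_subset_iff.2 fun j _ => hq j) (by rwa [biUnion_image])
    obtain ⟨_, ⟨j, hij, rfl⟩, hj⟩ := mem_iUnion₂.1 hcover
    exact hsep hij hj
  exact hcell.mk_le (fun i => (hopen _ (hq i)).sdiff isClosed_closure) (fun i => ⟨a i, hmem i⟩)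
    (pairwise_disjoint_sdiff_closure_biUnion_Ioi _)

theorem Cushioned.exists_subset_mk_le_inter_nonempty (hcell : CellularityLE X κ)
    {P : Set (Set X × Set X)} (hP : Cushioned P) (hopen : ∀ p ∈ P, IsOpen p.1) (A : Set X) :
    ∃ B ⊆ A, #B ≤ κ ∧ ∀ p ∈ P, (p.1 ∩ A).Nonempty → (B ∩ p.2).Nonempty := by
  by_contra! hbad
  obtain ⟨f, hf⟩ := exists_transfinite_seq_of_forall_mk_le κ
    (fun (S : Set (X × (Set X × Set X))) c =>
      c.1 ∈ A ∧ c.2 ∈ P ∧ c.1 ∈ c.2.1 ∧ ∀ s ∈ S, s.1 ∈ A → s.1 ∉ c.2.2)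
    fun S hS => by
      obtain ⟨p, hp, ⟨y, hy, hyA⟩, hmiss⟩ := hbad (Prod.fst '' S ∩ A) inter_subset_right
        ((mk_le_mk_of_subset inter_subset_left).trans (mk_image_le.trans hS))
      exact ⟨(y, p), hyA, hp, hy, fun s hs hsA hsp =>
        hmiss.subset ⟨⟨mem_image_of_mem _ hs, hsA⟩, hsp⟩⟩
  have := hP.mk_le_of_forall_lt_notMem hcell hopen (fun w => (f w).2) (fun w => (f w).1)
    (fun w => (hf w).2.1) (fun w => (hf w).2.2.1)
    fun v w hvw => (hf w).2.2.2 (f v) (mem_image_of_mem f hvw) (hf v).1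
  rw [mk_toType, card_ord] at this
  exact (Order.lt_succ κ).not_ge this

end

/-- If `X` is a σ-m₃-space, then its tightness is at most its cellularity: any infinite
cardinal bounding the cellularity of `X` bounds its tightness. -/
theorem sigmaM3_tightness_le_cellularity {X : Type u} [TopologicalSpace X]
    (h : ∀ x : X, SigmaM3At x) (κ : Cardinal.{u}) (hκ : ℵ₀ ≤ κ)
    (hcell : ∀ C : Set (Set X), (∀ V ∈ C, IsOpen V ∧ V.Nonempty) →
      C.PairwiseDisjoint id → #C ≤ κ) :
    ∀ (x : X) (A : Set X), x ∈ closure A → ∃ B ⊆ A, #B ≤ κ ∧ x ∈ closure B := by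
  intro x A hxA
  obtain ⟨P, hP, hpair, hbase⟩ := h x
  choose B hBA hBκ hBmeet using fun n =>
    (hP n).exists_subset_mk_le_inter_nonempty hcell (fun p hp => (hpair n p hp).1) A
  refine ⟨⋃ n, B n, iUnion_subset hBA, mk_iUnion_nat_le hκ hBκ,
    mem_closure_iff.2 fun U hU hxU => ?_⟩
  obtain ⟨n, p, hp, hxp, hpU⟩ := hbase U hU hxU
  obtain ⟨b, hbB, hbp⟩ := hBmeet n p hp (mem_closure_iff.1 hxA p.1 (hpair n p hp).1 hxp)
  exact ⟨b, hpU hbp, mem_iUnion_of_mem n hbB⟩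
end

section
/- If G is a separable topological group with the Baire property which is a σ-m₃-space (every point has a σ-cushioned local pairbase), then G is metrizable. -/
/-!
Fix a countable dense set `D` and a σ-cushioned local pairbase `⋃ₙ Pₙ` at `1`. For `a ∈ D` let
`S n a = sInterSndOfMemFst (P n) a` be the intersection of the `r.2` over the pairs `r ∈ Pₙ` with
`a ∈ r.1`. Cushioning of `Pₙ` says that each `y` has a neighbourhood whose points `z` satisfy
`y ∈ r.2` whenever `z ∈ r.1`; choosing `z = a ∈ D` there shows that the sets `S n a` with
`a ∈ q.1` cover `q.1` for every `q ∈ Pₙ`. By the Baire property one of them is somewhere dense,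
and it lies in `q.2`. Taking `q` inside the first coordinate of a pair `p`, whose closure lies in
`p.2` by cushioning, the countably many open sets `interior (closure (S n a))` form a local π-base
at `1`. In a topological group the sets `V⁻¹ * V` then form a countable neighbourhood base at `1`,
and a first countable T₀ group is metrizable (Birkhoff–Kakutani, through the right uniformity).
-/

open Set Topology Cardinal

open Filter Pointwise Uniformity

section PiBase

variable {X : Type*}

def sInterSndOfMemFst (P : Set (Set X × Set X)) (a : X) : Set X :=
  ⋂ r ∈ {r ∈ P | a ∈ r.1}, r.2

lemma sInterSndOfMemFst_subset {P : Set (Set X × Set X)} {a : X} {q : Set X × Set X}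
    (hq : q ∈ P) (ha : a ∈ q.1) : sInterSndOfMemFst P a ⊆ q.2 :=
  biInter_subset_of_mem (t := fun r : Set X × Set X => r.2) ⟨hq, ha⟩

variable [TopologicalSpace X]

def HasCountablePiBaseAt (x : X) : Prop :=
  ∃ 𝒱 : Set (Set X), 𝒱.Countable ∧ (∀ V ∈ 𝒱, IsOpen V ∧ V.Nonempty) ∧ ∀ U ∈ 𝓝 x, ∃ V ∈ 𝒱, V ⊆ U

namespace Cushioned

variable {P : Set (Set X × Set X)}

lemma closure_fst_subset_snd (hP : Cushioned P) {p : Set X × Set X} (hp : p ∈ P) :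
    closure p.1 ⊆ p.2 := by
  simpa using hP {p} (singleton_subset_iff.2 hp)

lemma eventually_forall_mem_fst_imp_mem_snd (hP : Cushioned P) (y : X) :
    ∀ᶠ z in 𝓝 y, ∀ r ∈ P, z ∈ r.1 → y ∈ r.2 := by
  have hy : y ∉ closure (⋃ r ∈ {r ∈ P | y ∉ r.2}, r.1) := fun hy => by
    obtain ⟨r, ⟨-, hyr⟩, hyr'⟩ := mem_iUnion₂.1 (hP _ (sep_subset _ _) hy)
    exact hyr hyr'
  rw [mem_closure_iff_frequently, not_frequently] at hy
  filter_upwards [hy] with z hz r hr hzr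
  by_contra hyr
  exact hz (mem_iUnion₂.2 ⟨r, ⟨hr, hyr⟩, hzr⟩)

lemma exists_mem_sInterSndOfMemFst (hP : Cushioned P) {D W : Set X} (hD : Dense D)
    (hW : IsOpen W) {y : X} (hy : y ∈ W) : ∃ a ∈ D ∩ W, y ∈ sInterSndOfMemFst P a := by
  obtain ⟨a, haD, ha, haW⟩ :=
    hD.inter_nhds_nonempty ((hP.eventually_forall_mem_fst_imp_mem_snd y).and (hW.mem_nhds hy))
  exact ⟨a, ⟨haD, haW⟩, mem_iInter₂.2 fun r hr => ha r hr.1 hr.2⟩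

lemma exists_nonempty_interior_closure_sInterSndOfMemFst [BaireSpace X] (hP : Cushioned P)
    {D W : Set X} (hDc : D.Countable) (hD : Dense D) (hW : IsOpen W) (hne : W.Nonempty) :
    ∃ a ∈ D ∩ W, (interior (closure (sInterSndOfMemFst P a))).Nonempty := by
  have hcover : W ⊆ ⋃ a ∈ D ∩ W, sInterSndOfMemFst P a := fun y hy => by
    obtain ⟨a, ha, hya⟩ := hP.exists_mem_sInterSndOfMemFst hD hW hy
    exact mem_biUnion ha hya
  obtain ⟨a, ha, hnm⟩ := exists_of_not_isMeagre_biUnion (hDc.mono inter_subset_left)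
    fun h => not_isMeagre_of_isOpen hW hne (h.mono hcover)
  exact ⟨a, ha, nonempty_iff_ne_empty.2 fun h => hnm (IsNowhereDense.isMeagre h)⟩

end Cushioned

theorem SigmaM3At.hasCountablePiBaseAt [TopologicalSpace.SeparableSpace X] [BaireSpace X]
    {x : X} (h : SigmaM3At x) : HasCountablePiBaseAt x := by
  obtain ⟨D, hDc, hD⟩ := TopologicalSpace.exists_countable_dense X
  obtain ⟨P, hcush, hpo, hloc⟩ := h
  have := hDc.to_subtype
  set V : ℕ × D → Set X := fun i => interior (closure (sInterSndOfMemFst (P i.1) i.2))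
  refine ⟨{W ∈ range V | W.Nonempty}, (countable_range V).mono (sep_subset _ _),
    fun W ⟨⟨i, hi⟩, hne⟩ => ⟨hi ▸ isOpen_interior, hne⟩, fun U hU => ?_⟩
  obtain ⟨n, p, hp, hxp, hpU⟩ :=
    hloc (interior U) isOpen_interior (mem_interior_iff_mem_nhds.2 hU)
  obtain ⟨m, q, hq, hxq, hqp⟩ := hloc p.1 (hpo n p hp).1 hxp
  obtain ⟨a, ⟨haD, haq⟩, hne⟩ :=
    (hcush m).exists_nonempty_interior_closure_sInterSndOfMemFst hDc hD (hpo m q hq).1 ⟨x, hxq⟩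
  refine ⟨V (m, ⟨a, haD⟩), ⟨mem_range_self _, hne⟩, ?_⟩
  calc V (m, ⟨a, haD⟩) ⊆ closure (sInterSndOfMemFst (P m) a) := interior_subset
    _ ⊆ closure p.1 := closure_mono ((sInterSndOfMemFst_subset hq haq).trans hqp)
    _ ⊆ p.2 := (hcush n).closure_fst_subset_snd hp
    _ ⊆ U := hpU.trans interior_subset

end PiBase

section Group

variable {G : Type*} [Group G] [TopologicalSpace G] [IsTopologicalGroup G]

lemma IsOpen.inv_mul_self_mem_nhds_one {V : Set G} (hV : IsOpen V) (hne : V.Nonempty) :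
    V⁻¹ * V ∈ 𝓝 (1 : G) := by
  obtain ⟨v, hv⟩ := hne
  exact hV.mul_left.mem_nhds (by simpa using mul_mem_mul (inv_mem_inv.2 hv) hv)

theorem HasCountablePiBaseAt.isCountablyGenerated_nhds_one (h : HasCountablePiBaseAt (1 : G)) :
    (𝓝 (1 : G)).IsCountablyGenerated := by
  obtain ⟨𝒱, hc, hV, hbase⟩ := h
  have := hc.to_subtype
  refine HasBasis.isCountablyGenerated (ι := 𝒱) (p := fun _ => True)
    (s := fun V => (V : Set G)⁻¹ * V) ⟨fun U => ⟨fun hU => ?_, ?_⟩⟩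
  · obtain ⟨A, hA, -, hAinv, hAA⟩ := exists_closed_nhds_one_inv_eq_mul_subset hU
    obtain ⟨V, hV𝒱, hVA⟩ := hbase A hA
    refine ⟨⟨V, hV𝒱⟩, trivial, (mul_subset_mul ?_ hVA).trans hAA⟩
    rwa [inv_subset, hAinv]
  · rintro ⟨⟨V, hV𝒱⟩, -, hVU⟩
    exact mem_of_superset ((hV V hV𝒱).1.inv_mul_self_mem_nhds_one (hV V hV𝒱).2) hVU

theorem IsTopologicalGroup.metrizableSpace_of_isCountablyGenerated_nhds_one [T0Space G]
    [(𝓝 (1 : G)).IsCountablyGenerated] : TopologicalSpace.MetrizableSpace G := by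
  let := IsTopologicalGroup.rightUniformSpace G
  have : (𝓤 G).IsCountablyGenerated := by
    rw [uniformity_eq_comap_nhds_one']
    exact comap.isCountablyGenerated _ _
  exact UniformSpace.metrizableSpace

end Group

/-- A separable topological group with the Baire property which is a σ-m₃-space
is metrizable. -/
theorem separable_baire_sigmaM3_group_metrizable {G : Type*} [Group G]
    [TopologicalSpace G] [IsTopologicalGroup G] [T1Space G]
    [TopologicalSpace.SeparableSpace G] [BaireSpace G]
    (h : ∀ x : G, SigmaM3At x) :
    TopologicalSpace.MetrizableSpace G := by
  have := (h 1).hasCountablePiBaseAt.isCountablyGenerated_nhds_one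
  exact IsTopologicalGroup.metrizableSpace_of_isCountablyGenerated_nhds_one
end
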